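/- arXiv:2112.01741 — 4 statements merged into one kernel-verified Lean document; each statement's English description precedes it below -/
import Mathlib

section
/- Proposition 1 (equivariance of the weighted PCA frame): Let w ∈ ℝ^d be a nonnegative weight vector with 𝟏ᵀw > 0, and let V ∈ ℝ^{d×3} be such that the weighted covariance C(V) has three distinct eigenvalues λ₁ < λ₂ < λ₃. Then for every g = (S,u) ∈ E(3), the weighted covariance of ρ(g)V = V Sᵀ + 𝟏 uᵀ also has eigenvalues λ₁ < λ₂ < λ₃, and the PCA frame satisfies F(ρ(g)V) = g F(V), i.e., (R', t') ∈ F(ρ(g)V) if and only if (R', t') = (S R, S t + u) for some (R, t) ∈ F(V). -/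
open Matrix

noncomputable section

/-- The all-ones vector in `ℝⁿ`. -/
def onesVec (n : ℕ) : Fin n → ℝ := fun _ => 1

/-- Action of `g = (R, t) ∈ E(3)` on `V ∈ ℝ^{n×3}`: `ρ(g)V = V Rᵀ + 𝟏 tᵀ`. -/
def euclAct {n : ℕ} (R : Matrix (Fin 3) (Fin 3) ℝ) (t : Fin 3 → ℝ)
    (V : Matrix (Fin n) (Fin 3) ℝ) : Matrix (Fin n) (Fin 3) ℝ :=
  V * Rᵀ + Matrix.vecMulVec (onesVec n) t

/-- Inverse action: `ρ(g)⁻¹ V = (V - 𝟏 tᵀ) R`. -/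
def euclActInv {n : ℕ} (R : Matrix (Fin 3) (Fin 3) ℝ) (t : Fin 3 → ℝ)
    (V : Matrix (Fin n) (Fin 3) ℝ) : Matrix (Fin n) (Fin 3) ℝ :=
  (V - Matrix.vecMulVec (onesVec n) t) * R

/-- The weighted centroid `t(V) = (1/(𝟏ᵀw)) Vᵀ w`. -/
def centroid {n : ℕ} (w : Fin n → ℝ) (V : Matrix (Fin n) (Fin 3) ℝ) : Fin 3 → ℝ :=
  (∑ i, w i)⁻¹ • (Vᵀ.mulVec w)

/-- The weighted covariance `C(V) = (V − 𝟏 t(V)ᵀ)ᵀ diag(w) (V − 𝟏 t(V)ᵀ)`. -/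
def wcov {n : ℕ} (w : Fin n → ℝ) (V : Matrix (Fin n) (Fin 3) ℝ) :
    Matrix (Fin 3) (Fin 3) ℝ :=
  (V - Matrix.vecMulVec (onesVec n) (centroid w V))ᵀ * Matrix.diagonal w *
    (V - Matrix.vecMulVec (onesVec n) (centroid w V))

/-- `μ` is an eigenvalue of `M`. -/
def IsEigenvalue (M : Matrix (Fin 3) (Fin 3) ℝ) (μ : ℝ) : Prop :=
  ∃ v : Fin 3 → ℝ, v ≠ 0 ∧ M.mulVec v = μ • v

/-- The weighted PCA frame: pairs `(R, t(V))` where the `i`-th column of `R` is a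
unit-norm eigenvector of the weighted covariance `C(V)` for the eigenvalue `lam i`. -/
def pcaFrame {n : ℕ} (lam : Fin 3 → ℝ) (w : Fin n → ℝ) (V : Matrix (Fin n) (Fin 3) ℝ) :
    Set (Matrix (Fin 3) (Fin 3) ℝ × (Fin 3 → ℝ)) :=
  { p | p.2 = centroid w V ∧ ∀ i : Fin 3,
      (fun j => p.1 j i) ⬝ᵥ (fun j => p.1 j i) = 1 ∧
      (wcov w V).mulVec (fun j => p.1 j i) = lam i • (fun j => p.1 j i) }

/-- Row-wise scaling `(a ⊙ B)_{ij} = a_i B_{ij}`. -/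
def rowScale {n : ℕ} (a : Fin n → ℝ) (B : Matrix (Fin n) (Fin 3) ℝ) :
    Matrix (Fin n) (Fin 3) ℝ :=
  Matrix.of fun i j => a i * B i j



lemma vecMulVec_mulVec_right {n : ℕ} (a : Fin n → ℝ) (b : Fin 3 → ℝ)
    (S : Matrix (Fin 3) (Fin 3) ℝ) :
    Matrix.vecMulVec a b * Sᵀ = Matrix.vecMulVec a (S.mulVec b) := by
  ext i j
  simp [Matrix.mul_apply, Matrix.vecMulVec_apply, Matrix.mulVec, dotProduct,
    Finset.mul_sum]
  congr 1; ext k; ring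

lemma centroid_euclAct {d : ℕ} (w : Fin d → ℝ) (hw' : 0 < ∑ i, w i)
    (V : Matrix (Fin d) (Fin 3) ℝ) (S : Matrix (Fin 3) (Fin 3) ℝ) (u : Fin 3 → ℝ) :
    centroid w (euclAct S u V) = S.mulVec (centroid w V) + u := by
  have hne : (∑ i, w i) ≠ 0 := ne_of_gt hw'
  unfold centroid euclAct
  ext j
  simp only [Matrix.transpose_add, Matrix.add_mulVec, Pi.smul_apply, Pi.add_apply,
    smul_eq_mul]
  have h1 : ((V * Sᵀ)ᵀ.mulVec w) j = (S.mulVec (Vᵀ.mulVec w)) j := by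
    simp [Matrix.mulVec, dotProduct, Matrix.mul_apply, Finset.mul_sum,
      Finset.sum_mul]
    rw [Finset.sum_comm]
    congr 1; ext k; congr 1; ext i; ring
  have h2 : ((Matrix.vecMulVec (onesVec d) u)ᵀ.mulVec w) j = (∑ i, w i) * u j := by
    simp [Matrix.mulVec, dotProduct, Matrix.vecMulVec_apply, onesVec,
      Finset.sum_mul, mul_comm]
    rw [← Finset.sum_mul, mul_comm]
  rw [h1, h2]
  have h3 : (S.mulVec ((∑ i, w i)⁻¹ • Vᵀ.mulVec w)) j
      = (∑ i, w i)⁻¹ * (S.mulVec (Vᵀ.mulVec w)) j := by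
    rw [Matrix.mulVec_smul]; simp
  rw [h3]
  field_simp

lemma wcov_euclAct {d : ℕ} (w : Fin d → ℝ) (hw' : 0 < ∑ i, w i)
    (V : Matrix (Fin d) (Fin 3) ℝ) (S : Matrix (Fin 3) (Fin 3) ℝ) (u : Fin 3 → ℝ) :
    wcov w (euclAct S u V) = S * wcov w V * Sᵀ := by
  have hc := centroid_euclAct w hw' V S u
  have key : euclAct S u V - Matrix.vecMulVec (onesVec d) (centroid w (euclAct S u V))
      = (V - Matrix.vecMulVec (onesVec d) (centroid w V)) * Sᵀ := by
    rw [hc]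
    have : Matrix.vecMulVec (onesVec d) (S.mulVec (centroid w V) + u)
        = Matrix.vecMulVec (onesVec d) (S.mulVec (centroid w V))
          + Matrix.vecMulVec (onesVec d) u := by
      ext i j; simp [Matrix.vecMulVec_apply, mul_add]
    rw [this, ← vecMulVec_mulVec_right]
    unfold euclAct
    rw [Matrix.sub_mul]
    abel
  unfold wcov
  rw [key, Matrix.transpose_mul, Matrix.transpose_transpose]
  simp [Matrix.mul_assoc]

lemma mulVec_col_mul (S R : Matrix (Fin 3) (Fin 3) ℝ) (i : Fin 3) :
    (fun j => (S * R) j i) = S.mulVec (fun j => R j i) := by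
  ext j; simp [Matrix.mul_apply, Matrix.mulVec, dotProduct]

lemma dot_mulVec_orth {S : Matrix (Fin 3) (Fin 3) ℝ} (hS : Sᵀ * S = 1)
    (v x : Fin 3 → ℝ) : S.mulVec v ⬝ᵥ S.mulVec x = v ⬝ᵥ x := by
  rw [Matrix.dotProduct_mulVec, ← Matrix.mulVec_transpose, Matrix.mulVec_mulVec, hS,
    Matrix.one_mulVec]

lemma conj_mulVec {S C : Matrix (Fin 3) (Fin 3) ℝ} (hS' : Sᵀ * S = 1)
    (v : Fin 3 → ℝ) : (S * C * Sᵀ).mulVec (S.mulVec v) = S.mulVec (C.mulVec v) := by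
  rw [Matrix.mulVec_mulVec, show S * C * Sᵀ * S = S * C by
    rw [Matrix.mul_assoc (S * C), hS', Matrix.mul_one], ← Matrix.mulVec_mulVec]

lemma mulVec_ne_zero_of_orth {S : Matrix (Fin 3) (Fin 3) ℝ} (hS : Sᵀ * S = 1)
    {v : Fin 3 → ℝ} (hv : v ≠ 0) : S.mulVec v ≠ 0 := by
  intro h
  apply hv
  have := congrArg (Sᵀ.mulVec ·) h
  simpa [Matrix.mulVec_mulVec, hS] using this

/-- **Proposition 1** (equivariance of the weighted PCA frame): if the weighted covariance
`C(V)` has three distinct eigenvalues `λ₁ < λ₂ < λ₃`, then for every `g = (S,u) ∈ E(3)`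
the weighted covariance of `ρ(g)V = V Sᵀ + 𝟏 uᵀ` has the same eigenvalues, and the PCA
frame satisfies `F(ρ(g)V) = g F(V)`. -/
theorem pcaFrame_equivariant {d : ℕ} (w : Fin d → ℝ)
    (hw : ∀ i, 0 ≤ w i) (hw' : 0 < ∑ i, w i)
    (V : Matrix (Fin d) (Fin 3) ℝ)
    (lam : Fin 3 → ℝ) (hmono : StrictMono lam)
    (heig : ∀ i, IsEigenvalue (wcov w V) (lam i))
    (S : Matrix (Fin 3) (Fin 3) ℝ) (u : Fin 3 → ℝ) (hS : S * Sᵀ = 1) :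
    (∀ i, IsEigenvalue (wcov w (euclAct S u V)) (lam i)) ∧
    (∀ R' : Matrix (Fin 3) (Fin 3) ℝ, ∀ t' : Fin 3 → ℝ,
      (R', t') ∈ pcaFrame lam w (euclAct S u V) ↔
        ∃ R : Matrix (Fin 3) (Fin 3) ℝ, ∃ t : Fin 3 → ℝ,
          (R, t) ∈ pcaFrame lam w V ∧ R' = S * R ∧ t' = S.mulVec t + u) := by
  have hS' : Sᵀ * S = 1 := mul_eq_one_comm.mp hS
  have hcov := wcov_euclAct w hw' V S u
  have hc := centroid_euclAct w hw' V S u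
  constructor
  · intro i
    obtain ⟨v, hv, hev⟩ := heig i
    refine ⟨S.mulVec v, mulVec_ne_zero_of_orth hS' hv, ?_⟩
    rw [hcov, conj_mulVec hS', hev, Matrix.mulVec_smul]
  · intro R' t'
    constructor
    · rintro ⟨ht, hcols⟩
      refine ⟨Sᵀ * R', centroid w V, ⟨rfl, ?_⟩, ?_, ?_⟩
      · intro i
        have hci := hcols i
        rw [mulVec_col_mul]
        set c : Fin 3 → ℝ := fun j => R' j i with hc'
        constructor
        · rw [dot_mulVec_orth (by rwa [Matrix.transpose_transpose]) c c]
          exact hci.1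
        · have h2 := hci.2
          rw [hcov] at h2
          have hw2 : wcov w V = Sᵀ * (S * wcov w V * Sᵀ) * Sᵀᵀ := by
            rw [Matrix.transpose_transpose]
            rw [show Sᵀ * (S * wcov w V * Sᵀ) * S
                = (Sᵀ * S) * wcov w V * (Sᵀ * S) by noncomm_ring, hS',
              Matrix.one_mul, Matrix.mul_one]
          rw [hw2, conj_mulVec (by rw [Matrix.transpose_transpose]; exact hS),
            h2, Matrix.mulVec_smul]
      · rw [show S * (Sᵀ * R') = (S * Sᵀ) * R' by noncomm_ring, hS, Matrix.one_mul]
      · exact ht.trans hc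
    · rintro ⟨R, t, ⟨ht, hcols⟩, rfl, rfl⟩
      have ht' : t = centroid w V := ht
      refine ⟨by show S.mulVec t + u = _; rw [hc, ht'], ?_⟩
      intro i
      have hci := hcols i
      rw [mulVec_col_mul]
      set c : Fin 3 → ℝ := fun j => R j i with hc'
      constructor
      · rw [dot_mulVec_orth hS' c c]; exact hci.1
      · rw [hcov, conj_mulVec hS', hci.2, Matrix.mulVec_smul]


end
end

section
/- Frame averaging yields equivariant maps: let G be a group acting on a set V via ρ_V and acting on a real vector space W via ρ_W, where each ρ_W(g) is an affine map of W. Let F be an equivariant frame on V, i.e., F assigns to each v ∈ V a nonempty finite subset F(v) ⊂ G with F(ρ_V(g)v) = g·F(v) for all g ∈ G and v ∈ V. Then for any function φ : V → W, the frame average ⟨φ⟩_F(v) = (1/|F(v)|) Σ_{g ∈ F(v)} ρ_W(g) φ(ρ_V(g)⁻¹ v) is equivariant: ⟨φ⟩_F(ρ_V(g)v) = ρ_W(g) ⟨φ⟩_F(v) for all g ∈ G, v ∈ V. -/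
/-!
The frame average at `v` is the centroid of the points `ρW h (φ (ρV h⁻¹ v))`, `h ∈ F v`.
Equivariance of the frame reindexes the average at `ρV g v` by `h ↦ g * h`, which turns each
point into `ρW g` of the corresponding point at `v`; an affine map commutes with centroids.
-/

open Finset

section Centroid

variable {k ι V P Q : Type*} [Field k] [CharZero k] [AddCommGroup V] [Module k V]

theorem Finset.centroid_eq_inv_card_smul_sum {s : Finset ι} (hs : s.Nonempty) (p : ι → V) :
    s.centroid k p = (#s : k)⁻¹ • ∑ i ∈ s, p i := by
  rw [centroid_def, affineCombination_eq_linear_combination _ _ _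
    (sum_centroidWeights_eq_one_of_nonempty k s hs), smul_sum]
  simp only [centroidWeights_apply]

theorem AffineMap.map_centroid [AddTorsor V P] {V₂ : Type*} [AddCommGroup V₂] [Module k V₂]
    [AddTorsor V₂ Q] (f : P →ᵃ[k] Q) {s : Finset ι} (hs : s.Nonempty) (p : ι → P) :
    f (s.centroid k p) = s.centroid k (f ∘ p) :=
  map_affineCombination _ _ _ (sum_centroidWeights_eq_one_of_nonempty k s hs) f

end Centroid

theorem frame_average_equivariant_general
    {G V W : Type*} [Group G] [DecidableEq G] [AddCommGroup W] [Module ℝ W]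
    (ρV : G → V → V)
    (hVmul : ∀ g h v, ρV (g * h) v = ρV g (ρV h v))
    (ρW : G → W → W)
    (hWmul : ∀ g h x, ρW (g * h) x = ρW g (ρW h x))
    (hAff : ∀ g : G, ∃ (L : W →ₗ[ℝ] W) (b : W), ∀ x, ρW g x = L x + b)
    (F : V → Finset G) (hne : ∀ v, (F v).Nonempty)
    (hF : ∀ g v, F (ρV g v) = (F v).image (fun h => g * h))
    (φ : V → W) (g : G) (v : V) :
    ((F (ρV g v)).card : ℝ)⁻¹ • ∑ h ∈ F (ρV g v), ρW h (φ (ρV h⁻¹ (ρV g v))) =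
      ρW g (((F v).card : ℝ)⁻¹ • ∑ h ∈ F v, ρW h (φ (ρV h⁻¹ v))) := by
  obtain ⟨L, b, hLb⟩ := hAff g
  have hρWg : ⇑(L.toAffineMap + AffineMap.const ℝ W b) = ρW g := by
    ext x
    simp [hLb]
  have hFg : F (ρV g v) = (F v).map (mulLeftEmbedding g) := by
    rw [hF, map_eq_image]
    rfl
  have hpoint : ∀ h, ρW (g * h) (φ (ρV (g * h)⁻¹ (ρV g v))) = ρW g (ρW h (φ (ρV h⁻¹ v))) := by
    intro h
    rw [hWmul, ← hVmul, mul_inv_rev, inv_mul_cancel_right]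
  rw [← centroid_eq_inv_card_smul_sum (hne _), ← centroid_eq_inv_card_smul_sum (hne v), hFg,
    centroid_map, ← hρWg, AffineMap.map_centroid _ (hne v)]
  simp only [Function.comp_def, mulLeftEmbedding_apply, hρWg, hpoint]

/-- **Frame averaging yields equivariant maps**: let `G` be a group acting on a set `V`
via `ρV` and on a real vector space `W` via `ρW`, where each `ρW g` is an affine map.
If `F` is an equivariant frame (nonempty finite subsets of `G` with
`F(ρV(g)v) = g F(v)`), then for any `φ : V → W` the frame average
`⟨φ⟩_F(v) = (1/|F(v)|) Σ_{h ∈ F(v)} ρW(h) φ(ρV(h)⁻¹ v)` is equivariant. -/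
theorem frame_average_equivariant
    {G V W : Type*} [Group G] [DecidableEq G] [AddCommGroup W] [Module ℝ W]
    (ρV : G → V → V) (hV1 : ∀ v, ρV 1 v = v)
    (hVmul : ∀ g h v, ρV (g * h) v = ρV g (ρV h v))
    (ρW : G → W → W) (hW1 : ∀ x, ρW 1 x = x)
    (hWmul : ∀ g h x, ρW (g * h) x = ρW g (ρW h x))
    (hAff : ∀ g : G, ∃ (L : W →ₗ[ℝ] W) (b : W), ∀ x, ρW g x = L x + b)
    (F : V → Finset G) (hne : ∀ v, (F v).Nonempty)
    (hF : ∀ g v, F (ρV g v) = (F v).image (fun h => g * h))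
    (φ : V → W) (g : G) (v : V) :
    ((F (ρV g v)).card : ℝ)⁻¹ • ∑ h ∈ F (ρV g v), ρW h (φ (ρV h⁻¹ (ρV g v))) =
      ρW g (((F v).card : ℝ)⁻¹ • ∑ h ∈ F v, ρW h (φ (ρV h⁻¹ v))) :=
  frame_average_equivariant_general ρV hVmul ρW hWmul hAff F hne hF φ g v
end

section
/- Part-equivariance of the per-part PCA frames (hard weights): let W ∈ {0,1}^{n×k} with each row summing to 1, and denote by w_j the j-th column of W. Let X ∈ ℝ^{n×3} be such that for each j the w_j-weighted covariance of X has three distinct eigenvalues, fix g₁,…,g_k ∈ E(3), and set X' = Σ_{l=1}^k w_l ⊙ (ρ(g_l)X). Then for each j, the w_j-weighted PCA frame satisfies F_j(X') = g_j F_j(X). -/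
open Matrix

noncomputable section

/-! With hard weights, `X'` agrees with `ρ(g_j)X` on every row where `w_j` is nonzero, and the
`w_j`-weighted centroid and covariance only see those rows. Under `ρ(g)`, `g = (R, t)`, the
centroid is moved by `g` and the covariance is conjugated by `R`; for orthogonal `R`, `u ↦ R u`
maps the unit eigenvectors of `C(X)` bijectively onto those of `R C(X) Rᵀ`, with the same
eigenvalues. -/

lemma eq_zero_of_ne_of_zero_one_of_sum_eq_one {ι : Type*} [Fintype ι] {a : ι → ℝ}
    (h01 : ∀ l, a l = 0 ∨ a l = 1) (hsum : ∑ l, a l = 1) {j l : ι} (hj : a j ≠ 0)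
    (hl : l ≠ j) : a l = 0 := by
  classical
  have hle : a j + a l ≤ 1 := by
    rw [← hsum, ← Finset.sum_pair hl.symm]
    refine Finset.sum_le_sum_of_subset_of_nonneg (Finset.subset_univ _) fun m _ _ => ?_
    rcases h01 m with h | h <;> simp [h]
  rcases h01 l with h | h
  · exact h
  · linarith [(h01 j).resolve_left hj]

lemma sum_rowScale_row_of_zero_one {n k : ℕ} {W : Matrix (Fin n) (Fin k) ℝ}
    (hW01 : ∀ i j, W i j = 0 ∨ W i j = 1) (hWrow : ∀ i, ∑ j, W i j = 1)
    (Y : Fin k → Matrix (Fin n) (Fin 3) ℝ) {i : Fin n} {j : Fin k} (hij : W i j ≠ 0) :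
    (∑ l, rowScale (fun i => W i l) (Y l)) i = Y j i := by
  ext a
  rw [Matrix.sum_apply, Finset.sum_eq_single j]
  · simp [rowScale, (hW01 i j).resolve_left hij]
  · intro l _ hl
    simp [rowScale, eq_zero_of_ne_of_zero_one_of_sum_eq_one (hW01 i) (hWrow i) hij hl]
  · simp

lemma transpose_mul_diagonal_mul_congr {m n : Type*} [Fintype m] [DecidableEq m]
    {w : m → ℝ} {A B : Matrix m n ℝ} (h : ∀ i, w i ≠ 0 → A i = B i) :
    Aᵀ * diagonal w * A = Bᵀ * diagonal w * B := by
  ext a b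
  rw [mul_apply, mul_apply]
  simp only [mul_diagonal, transpose_apply]
  refine Finset.sum_congr rfl fun i _ => ?_
  by_cases hw : w i = 0
  · simp [hw]
  · rw [h i hw]

section Frame

variable {n : ℕ} {w : Fin n → ℝ}

lemma centroid_congr {V V' : Matrix (Fin n) (Fin 3) ℝ} (h : ∀ i, w i ≠ 0 → V i = V' i) :
    centroid w V = centroid w V' := by
  simp only [centroid, mulVec_transpose, vecMul_eq_sum]
  congr 1
  refine Finset.sum_congr rfl fun i _ => ?_
  by_cases hw : w i = 0
  · simp [hw]
  · rw [h i hw]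

lemma wcov_congr {V V' : Matrix (Fin n) (Fin 3) ℝ} (h : ∀ i, w i ≠ 0 → V i = V' i) :
    wcov w V = wcov w V' := by
  unfold wcov
  refine transpose_mul_diagonal_mul_congr fun i hi => ?_
  rw [centroid_congr h]
  ext a
  simp [h i hi]

lemma pcaFrame_congr (lam : Fin 3 → ℝ) {V V' : Matrix (Fin n) (Fin 3) ℝ}
    (h : ∀ i, w i ≠ 0 → V i = V' i) : pcaFrame lam w V = pcaFrame lam w V' := by
  simp only [pcaFrame, centroid_congr h, wcov_congr h]

variable (R : Matrix (Fin 3) (Fin 3) ℝ) (t : Fin 3 → ℝ) (V : Matrix (Fin n) (Fin 3) ℝ)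

lemma transpose_vecMulVec_onesVec_mulVec :
    (vecMulVec (onesVec n) t)ᵀ *ᵥ w = (∑ i, w i) • t := by
  funext a
  simp [mulVec, dotProduct, vecMulVec_apply, onesVec, mul_comm, Finset.mul_sum]

lemma centroid_euclAct_s9 (hw : ∑ i, w i ≠ 0) :
    centroid w (euclAct R t V) = R *ᵥ centroid w V + t := by
  unfold centroid euclAct
  rw [transpose_add, transpose_mul, transpose_transpose, add_mulVec,
    transpose_vecMulVec_onesVec_mulVec, ← mulVec_mulVec, smul_add, smul_smul,
    inv_mul_cancel₀ hw, one_smul, mulVec_smul]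

lemma euclAct_sub_centroid (hw : ∑ i, w i ≠ 0) :
    euclAct R t V - vecMulVec (onesVec n) (centroid w (euclAct R t V))
      = (V - vecMulVec (onesVec n) (centroid w V)) * Rᵀ := by
  rw [centroid_euclAct_s9 R t V hw]
  ext i a
  simp [euclAct, mul_apply, vecMulVec_apply, onesVec, mulVec, dotProduct,
    Finset.sum_sub_distrib, mul_comm, mul_sub]

lemma wcov_euclAct_s9 (hw : ∑ i, w i ≠ 0) :
    wcov w (euclAct R t V) = R * wcov w V * Rᵀ := by
  unfold wcov
  rw [euclAct_sub_centroid R t V hw, transpose_mul, transpose_transpose]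
  simp only [Matrix.mul_assoc]

end Frame

section Orthogonal

variable (R : Matrix (Fin 3) (Fin 3) ℝ)

lemma mul_column (A : Matrix (Fin 3) (Fin 3) ℝ) (i : Fin 3) :
    (fun j => (R * A) j i) = R *ᵥ fun j => A j i := by
  funext j
  simp [mul_apply, mulVec, dotProduct]

lemma unit_eigenvector_conj_iff (hR : Rᵀ * R = 1) (C : Matrix (Fin 3) (Fin 3) ℝ) (μ : ℝ)
    (u : Fin 3 → ℝ) :
    (R *ᵥ u ⬝ᵥ R *ᵥ u = 1 ∧ (R * C * Rᵀ) *ᵥ (R *ᵥ u) = μ • R *ᵥ u) ↔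
      (u ⬝ᵥ u = 1 ∧ C *ᵥ u = μ • u) := by
  have hnorm : R *ᵥ u ⬝ᵥ R *ᵥ u = u ⬝ᵥ u := by
    rw [dotProduct_mulVec, ← mulVec_transpose, mulVec_mulVec, hR, one_mulVec]
  have hconj : (R * C * Rᵀ) *ᵥ (R *ᵥ u) = R *ᵥ (C *ᵥ u) := by
    rw [mulVec_mulVec, Matrix.mul_assoc _ Rᵀ, hR, Matrix.mul_one, mulVec_mulVec]
  have hinj : ∀ x y : Fin 3 → ℝ, R *ᵥ x = R *ᵥ y ↔ x = y := fun x y =>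
    ⟨fun h => by simpa [mulVec_mulVec, hR] using congrArg (Rᵀ *ᵥ ·) h, congrArg _⟩
  rw [hnorm, hconj, ← mulVec_smul, hinj]

variable {n : ℕ} {w : Fin n → ℝ} (t : Fin 3 → ℝ) (V : Matrix (Fin n) (Fin 3) ℝ)

lemma pcaFrame_euclAct (lam : Fin 3 → ℝ) (hw : ∑ i, w i ≠ 0) (hR : R * Rᵀ = 1) :
    pcaFrame lam w (euclAct R t V) =
      {p | ∃ q ∈ pcaFrame lam w V, p = (R * q.1, R *ᵥ q.2 + t)} := by
  have hR' : Rᵀ * R = 1 := mul_eq_one_comm.mp hR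
  ext ⟨P, c⟩
  simp only [pcaFrame, Set.mem_ofPred_eq, centroid_euclAct_s9 R t V hw, wcov_euclAct_s9 R t V hw,
    Prod.mk.injEq]
  constructor
  · rintro ⟨rfl, hcols⟩
    have hP : R * (Rᵀ * P) = P := by rw [← Matrix.mul_assoc, hR, Matrix.one_mul]
    refine ⟨(Rᵀ * P, centroid w V), ⟨rfl, fun i => ?_⟩, hP.symm, rfl⟩
    rw [mul_column, ← unit_eigenvector_conj_iff R hR']
    simpa only [mulVec_mulVec, hR, one_mulVec] using hcols i
  · rintro ⟨⟨Q, c'⟩, ⟨rfl, hcols⟩, rfl, rfl⟩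
    exact ⟨rfl, fun i => by rw [mul_column, unit_eigenvector_conj_iff R hR']; exact hcols i⟩

end Orthogonal

theorem part_frames_equivariant_general {n k : ℕ}
    (W : Matrix (Fin n) (Fin k) ℝ)
    (hW01 : ∀ i j, W i j = 0 ∨ W i j = 1)
    (hWrow : ∀ i, ∑ j, W i j = 1)
    (hWcol : ∀ j, 0 < ∑ i, W i j)
    (X : Matrix (Fin n) (Fin 3) ℝ)
    (lam : Fin k → Fin 3 → ℝ)
    (g : Fin k → Matrix (Fin 3) (Fin 3) ℝ × (Fin 3 → ℝ))
    (hg : ∀ l, (g l).1 * (g l).1ᵀ = 1) :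
    ∀ j : Fin k,
      pcaFrame (lam j) (fun i => W i j)
          (∑ l, rowScale (fun i => W i l) (euclAct (g l).1 (g l).2 X)) =
        {p | ∃ q ∈ pcaFrame (lam j) (fun i => W i j) X,
          p = ((g j).1 * q.1, (g j).1.mulVec q.2 + (g j).2)} := by
  intro j
  rw [pcaFrame_congr (lam j) fun i hij =>
      sum_rowScale_row_of_zero_one hW01 hWrow (fun l => euclAct (g l).1 (g l).2 X) hij,
    pcaFrame_euclAct _ _ X (lam j) (hWcol j).ne' (hg j)]

/-- **Part-equivariance of the per-part PCA frames (hard weights)**: for a hard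
partitioning weight matrix `W ∈ {0,1}^{n×k}` with rows summing to `1` (columns `w_j`),
if for each `j` the `w_j`-weighted covariance of `X` has three distinct eigenvalues
`λ^j₁ < λ^j₂ < λ^j₃`, then for any `g₁,…,g_k ∈ E(3)` and
`X' = Σ_l w_l ⊙ (ρ(g_l)X)`, each per-part PCA frame satisfies `F_j(X') = g_j F_j(X)`. -/
theorem part_frames_equivariant {n k : ℕ}
    (W : Matrix (Fin n) (Fin k) ℝ)
    (hW01 : ∀ i j, W i j = 0 ∨ W i j = 1)
    (hWrow : ∀ i, ∑ j, W i j = 1)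
    (hWcol : ∀ j, 0 < ∑ i, W i j)
    (X : Matrix (Fin n) (Fin 3) ℝ)
    (lam : Fin k → Fin 3 → ℝ)
    (hmono : ∀ j, StrictMono (lam j))
    (heig : ∀ j i, IsEigenvalue (wcov (fun i' => W i' j) X) (lam j i))
    (g : Fin k → Matrix (Fin 3) (Fin 3) ℝ × (Fin 3 → ℝ))
    (hg : ∀ l, (g l).1 * (g l).1ᵀ = 1) :
    ∀ j : Fin k,
      pcaFrame (lam j) (fun i => W i j)
          (∑ l, rowScale (fun i => W i l) (euclAct (g l).1 (g l).2 X)) =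
        {p | ∃ q ∈ pcaFrame (lam j) (fun i => W i j) X,
          p = ((g j).1 * q.1, (g j).1.mulVec q.2 + (g j).2)} :=
  part_frames_equivariant_general W hW01 hWrow hWcol X lam g hg

end
end

section
/- Theorem 1, decoder part (part-equivariance of the frame-averaged decoder): let W ∈ {0,1}^{n×k} with each row summing to 1, with columns w_j, and let ψ : ℝ^m × ℝ^{d×3} → ℝ^{n×3} be an arbitrary function. For latent codes Z = (Z₁,…,Z_k), Z_j = (u_j, U_j) ∈ ℝ^m × ℝ^{d×3}, define the decoded shape Ψ(Z) = Σ_{j=1}^k w_j ⊙ ⟨ψ⟩_F(Z_j), where ⟨ψ⟩_F(Z_j) = (1/|F(Z_j)|) Σ_{g ∈ F(Z_j)} ρ_Y(g) ψ(ρ_Z(g)⁻¹ Z_j) and F(Z_j) is the PCA frame (with uniform weights 𝟏) of the equivariant part U_j, assumed to have a covariance with three distinct eigenvalues. Then for any g₁,…,g_k ∈ E(3), setting Z'_j = ρ_Z(g_j)Z_j for each j, the decoded shape satisfies Ψ(Z') = Σ_{j=1}^k w_j ⊙ (ρ_Y(g_j) Ψ(Z)). -/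
open Matrix

noncomputable section

/-- Action of `g = (R,t) ∈ E(3)` on a latent code `(u,U)`: `ρ_Z(g)(u,U) = (u, U Rᵀ + 𝟏 tᵀ)`. -/
def rhoZ {m d : ℕ} (R : Matrix (Fin 3) (Fin 3) ℝ) (t : Fin 3 → ℝ)
    (Z : (Fin m → ℝ) × Matrix (Fin d) (Fin 3) ℝ) :
    (Fin m → ℝ) × Matrix (Fin d) (Fin 3) ℝ :=
  (Z.1, euclAct R t Z.2)

/-- Frame-averaged decoding of a single latent code:
`⟨ψ⟩_F(Z_j) = (1/|F(Z_j)|) Σ_{g ∈ F(Z_j)} ρ_Y(g) ψ(ρ_Z(g)⁻¹ Z_j)`, where `F(Z_j)` is the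
PCA frame (uniform weights `𝟏`) of the equivariant part `U_j` of `Z_j`. -/
def decAvg {m d n : ℕ} (lam : Fin 3 → ℝ)
    (ψ : (Fin m → ℝ) × Matrix (Fin d) (Fin 3) ℝ → Matrix (Fin n) (Fin 3) ℝ)
    (Zj : (Fin m → ℝ) × Matrix (Fin d) (Fin 3) ℝ) : Matrix (Fin n) (Fin 3) ℝ :=
  (Nat.card (pcaFrame lam (onesVec d) Zj.2) : ℝ)⁻¹ •
    ∑ᶠ p ∈ pcaFrame lam (onesVec d) Zj.2,
      euclAct p.1 p.2 (ψ (Zj.1, euclActInv p.1 p.2 Zj.2))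

/-- The decoded shape `Ψ(Z) = Σ_{j=1}^k w_j ⊙ ⟨ψ⟩_F(Z_j)`. -/
def decShape {n k m d : ℕ} (W : Matrix (Fin n) (Fin k) ℝ) (lam : Fin k → Fin 3 → ℝ)
    (ψ : (Fin m → ℝ) × Matrix (Fin d) (Fin 3) ℝ → Matrix (Fin n) (Fin 3) ℝ)
    (Z : Fin k → (Fin m → ℝ) × Matrix (Fin d) (Fin 3) ℝ) : Matrix (Fin n) (Fin 3) ℝ :=
  ∑ j, rowScale (fun i => W i j) (decAvg (lam j) ψ (Z j))

lemma orth_tr {R : Matrix (Fin 3) (Fin 3) ℝ} (h : R * Rᵀ = 1) : Rᵀ * R = 1 :=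
  mul_eq_one_comm.mp h

lemma col_mul (R Q : Matrix (Fin 3) (Fin 3) ℝ) (i : Fin 3) :
    (fun j => (R * Q) j i) = R.mulVec (fun j => Q j i) := by
  ext j; simp [Matrix.mul_apply, Matrix.mulVec, dotProduct]

lemma dot_rot {R : Matrix (Fin 3) (Fin 3) ℝ} (h : Rᵀ * R = 1) (v : Fin 3 → ℝ) :
    (R.mulVec v) ⬝ᵥ (R.mulVec v) = v ⬝ᵥ v := by
  rw [Matrix.dotProduct_mulVec, ← Matrix.mulVec_transpose, Matrix.mulVec_mulVec, h,
    Matrix.one_mulVec]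

lemma centroid_act {d : ℕ} (hd : 0 < d) (R : Matrix (Fin 3) (Fin 3) ℝ) (t : Fin 3 → ℝ)
    (V : Matrix (Fin d) (Fin 3) ℝ) :
    centroid (onesVec d) (euclAct R t V) = R.mulVec (centroid (onesVec d) V) + t := by
  have hsum : (∑ i, onesVec d i) = (d : ℝ) := by simp [onesVec]
  have hdne : (d : ℝ) ≠ 0 := Nat.cast_ne_zero.mpr hd.ne'
  funext j
  simp only [centroid, euclAct, hsum, Pi.smul_apply, Pi.add_apply, smul_eq_mul,
    Matrix.mulVec, dotProduct, Matrix.transpose_apply, Matrix.add_apply,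
    Matrix.mul_apply, Matrix.vecMulVec_apply, onesVec]
  have h1 : (∑ _x : Fin d, (1:ℝ)) = (d:ℝ) := by simp
  simp only [mul_one, one_mul, h1]
  rw [Finset.sum_add_distrib, Finset.sum_const, Finset.card_univ, Fintype.card_fin,
    nsmul_eq_mul, Finset.sum_comm, mul_add, Finset.mul_sum]
  congr 1
  · exact Finset.sum_congr rfl fun l _ => by rw [← Finset.sum_mul]; ring
  · field_simp

lemma vecMulVec_mulVec_right_s11 {n : ℕ} (u : Fin n → ℝ) (R : Matrix (Fin 3) (Fin 3) ℝ)
    (c : Fin 3 → ℝ) :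
    Matrix.vecMulVec u (R.mulVec c) = Matrix.vecMulVec u c * Rᵀ := by
  ext i j
  simp [Matrix.vecMulVec_apply, Matrix.mul_apply, Matrix.mulVec, dotProduct,
    Finset.mul_sum, mul_comm, mul_left_comm]

lemma center_act {d : ℕ} (hd : 0 < d) (R : Matrix (Fin 3) (Fin 3) ℝ) (t : Fin 3 → ℝ)
    (V : Matrix (Fin d) (Fin 3) ℝ) :
    euclAct R t V - Matrix.vecMulVec (onesVec d) (centroid (onesVec d) (euclAct R t V)) =
      (V - Matrix.vecMulVec (onesVec d) (centroid (onesVec d) V)) * Rᵀ := by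
  rw [centroid_act hd, euclAct]
  have : Matrix.vecMulVec (onesVec d) (R.mulVec (centroid (onesVec d) V) + t)
      = Matrix.vecMulVec (onesVec d) (centroid (onesVec d) V) * Rᵀ
        + Matrix.vecMulVec (onesVec d) t := by
    ext i j
    simp [Matrix.vecMulVec_apply, Matrix.add_apply, mul_add,
      vecMulVec_mulVec_right_s11, Matrix.mul_apply, Matrix.mulVec, dotProduct,
      Finset.mul_sum, mul_comm, mul_left_comm]
  rw [this, Matrix.sub_mul]
  abel

lemma wcov_act {d : ℕ} (hd : 0 < d) {R : Matrix (Fin 3) (Fin 3) ℝ} (t : Fin 3 → ℝ)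
    (V : Matrix (Fin d) (Fin 3) ℝ) :
    wcov (onesVec d) (euclAct R t V) = R * wcov (onesVec d) V * Rᵀ := by
  rw [wcov, center_act hd, wcov, Matrix.transpose_mul, Matrix.transpose_transpose]
  simp only [Matrix.mul_assoc]

lemma eig_conj {C R : Matrix (Fin 3) (Fin 3) ℝ} (hRR : R * Rᵀ = 1) {v : Fin 3 → ℝ}
    {μ : ℝ} (h : C.mulVec v = μ • v) :
    (R * C * Rᵀ).mulVec (R.mulVec v) = μ • (R.mulVec v) := by
  rw [Matrix.mulVec_mulVec, Matrix.mul_assoc (R * C) Rᵀ R, orth_tr hRR, Matrix.mul_one,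
    ← Matrix.mulVec_mulVec, h, Matrix.mulVec_smul]

lemma pcaFrame_act {d : ℕ} (hd : 0 < d) (lam : Fin 3 → ℝ)
    {R : Matrix (Fin 3) (Fin 3) ℝ} (hR : R * Rᵀ = 1) (t : Fin 3 → ℝ)
    (V : Matrix (Fin d) (Fin 3) ℝ) :
    pcaFrame lam (onesVec d) (euclAct R t V) =
      (fun q : Matrix (Fin 3) (Fin 3) ℝ × (Fin 3 → ℝ) =>
        (R * q.1, R.mulVec q.2 + t)) '' pcaFrame lam (onesVec d) V := by
  have hR' : Rᵀ * R = 1 := orth_tr hR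
  have hRt : Rᵀ * Rᵀᵀ = 1 := by rwa [Matrix.transpose_transpose]
  have hRt2 : Rᵀᵀ * Rᵀ = 1 := by rwa [Matrix.transpose_transpose]
  ext p
  constructor
  · rintro ⟨hp2, hpc⟩
    refine ⟨(Rᵀ * p.1, Rᵀ.mulVec (p.2 - t)), ⟨?_, ?_⟩, ?_⟩
    · rw [hp2, centroid_act hd, add_sub_cancel_right, Matrix.mulVec_mulVec, hR',
        Matrix.one_mulVec]
    · intro i
      rw [col_mul]
      obtain ⟨h1, h2⟩ := hpc i
      have hC : wcov (onesVec d) V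
          = Rᵀ * wcov (onesVec d) (euclAct R t V) * Rᵀᵀ := by
        rw [Matrix.transpose_transpose, wcov_act hd, ← Matrix.mul_assoc, ← Matrix.mul_assoc,
          hR', Matrix.one_mul, Matrix.mul_assoc, hR', Matrix.mul_one]
      exact ⟨by rw [dot_rot hRt2]; exact h1, by rw [hC]; exact eig_conj hRt h2⟩
    · have e1 : R * (Rᵀ * p.1) = p.1 := by rw [← Matrix.mul_assoc, hR, Matrix.one_mul]
      have e2 : R.mulVec (Rᵀ.mulVec (p.2 - t)) + t = p.2 := by
        rw [Matrix.mulVec_mulVec, hR, Matrix.one_mulVec, sub_add_cancel]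
      exact Prod.ext e1 e2
  · rintro ⟨q, ⟨hq2, hqc⟩, rfl⟩
    constructor
    · show R.mulVec q.2 + t = _
      rw [centroid_act hd, hq2]
    · intro i
      rw [col_mul]
      obtain ⟨h1, h2⟩ := hqc i
      exact ⟨by rw [dot_rot hR']; exact h1, by rw [wcov_act hd]; exact eig_conj hR h2⟩

lemma dot_pos {v : Fin 3 → ℝ} (hv : v ≠ 0) : 0 < v ⬝ᵥ v := by
  rcases lt_or_eq_of_le (Finset.sum_nonneg fun j _ => mul_self_nonneg (v j) :
    (0:ℝ) ≤ v ⬝ᵥ v) with h | h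
  · exact h
  · exact absurd (dotProduct_self_eq_zero.mp h.symm) hv

lemma smul_col_dot (a : ℝ) (v : Fin 3 → ℝ) : (a • v) ⬝ᵥ (a • v) = a ^ 2 * (v ⬝ᵥ v) := by
  simp [dotProduct, Finset.mul_sum]; ring_nf

lemma pcaFrame_nonempty {d : ℕ} (lam : Fin 3 → ℝ) (V : Matrix (Fin d) (Fin 3) ℝ)
    (heig : ∀ i, IsEigenvalue (wcov (onesVec d) V) (lam i)) :
    (pcaFrame lam (onesVec d) V).Nonempty := by
  choose v hv0 hv using heig
  refine ⟨(Matrix.of fun j i => ((Real.sqrt (v i ⬝ᵥ v i))⁻¹ • v i) j, centroid (onesVec d) V),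
    rfl, fun i => ?_⟩
  have hs : 0 < v i ⬝ᵥ v i := dot_pos (hv0 i)
  have hcol : (fun j => (Matrix.of fun j i => ((Real.sqrt (v i ⬝ᵥ v i))⁻¹ • v i) j) j i)
      = (Real.sqrt (v i ⬝ᵥ v i))⁻¹ • v i := rfl
  rw [hcol]
  constructor
  · rw [smul_col_dot, inv_pow, Real.sq_sqrt hs.le, inv_mul_cancel₀ hs.ne']
  · rw [Matrix.mulVec_smul, hv i, smul_comm]

lemma pcaFrame_finite {d : ℕ} (lam : Fin 3 → ℝ) (hmono : StrictMono lam)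
    (V : Matrix (Fin d) (Fin 3) ℝ)
    (heig : ∀ i, IsEigenvalue (wcov (onesVec d) V) (lam i)) :
    (pcaFrame lam (onesVec d) V).Finite := by
  choose v hv0 hv using heig
  have hli : LinearIndependent ℝ v := by
    apply Module.End.eigenvectors_linearIndependent' (Matrix.mulVecLin (wcov (onesVec d) V))
      lam hmono.injective
    intro i
    exact ⟨Module.End.mem_eigenspace_iff.mpr (by simpa using hv i), hv0 i⟩
  let b : Module.Basis (Fin 3) ℝ (Fin 3 → ℝ) := basisOfLinearIndependentOfCardEqFinrank hli
    (by simp [Module.finrank_fin_fun])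
  have hbv : ⇑b = v := coe_basisOfLinearIndependentOfCardEqFinrank hli _
  have hspan : ∀ i (u : Fin 3 → ℝ),
      (wcov (onesVec d) V).mulVec u = lam i • u → ∃ a : ℝ, u = a • v i := by
    intro i u hu
    have hrep := b.sum_repr u
    simp only [hbv] at hrep
    set c := fun l => b.repr u l with hc
    have expand : (wcov (onesVec d) V).mulVec u = ∑ l, (c l * lam l) • v l := by
      conv_lhs => rw [← hrep]
      rw [← Matrix.mulVecLin_apply, map_sum]
      refine Finset.sum_congr rfl fun l _ => ?_
      rw [_root_.map_smul, Matrix.mulVecLin_apply, hv l, smul_smul]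
    have expand2 : lam i • u = ∑ l, (lam i * c l) • v l := by
      conv_lhs => rw [← hrep, Finset.smul_sum]
      exact Finset.sum_congr rfl fun l _ => by rw [smul_smul]
    have hz : ∑ l, ((c l * lam l) - (lam i * c l)) • v l = 0 := by
      simp only [sub_smul, Finset.sum_sub_distrib, ← expand, ← expand2, hu, sub_self]
    have hcoef := Fintype.linearIndependent_iff.mp hli _ hz
    refine ⟨c i, ?_⟩
    rw [← hrep]
    rw [Finset.sum_eq_single i]
    · intro l _ hl
      have := hcoef l
      have hne : lam l - lam i ≠ 0 := sub_ne_zero.mpr (fun h => hl (hmono.injective h))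
      have : c l * (lam l - lam i) = 0 := by linarith [hcoef l]
      have : c l = 0 := by
        rcases mul_eq_zero.mp this with h | h
        · exact h
        · exact absurd h hne
      rw [show (b.repr u) l = c l from rfl, this, zero_smul]
    · intro h; exact absurd (Finset.mem_univ i) h
  -- now build the finite superset
  set r := fun i => (Real.sqrt (v i ⬝ᵥ v i))⁻¹ with hr
  have key : pcaFrame lam (onesVec d) V ⊆
      (fun f : Fin 3 → Fin 3 → ℝ => ((Matrix.of fun j i => f i j), centroid (onesVec d) V)) ''
        (Set.pi Set.univ fun i => ({r i • v i, (-(r i)) • v i} : Set (Fin 3 → ℝ))) := by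
    rintro p ⟨hp2, hpc⟩
    refine ⟨fun i j => p.1 j i, ?_, ?_⟩
    · intro i _
      obtain ⟨h1, h2⟩ := hpc i
      obtain ⟨a, ha⟩ := hspan i _ h2
      have hs : 0 < v i ⬝ᵥ v i := dot_pos (hv0 i)
      have h1' : a ^ 2 * (v i ⬝ᵥ v i) = 1 := by rw [ha, smul_col_dot] at h1; exact h1
      have ha2 : a ^ 2 = (r i) ^ 2 := by
        have hri : (r i) ^ 2 = (v i ⬝ᵥ v i)⁻¹ := by
          rw [hr]; dsimp only; rw [inv_pow, Real.sq_sqrt hs.le]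
        rw [hri, inv_eq_one_div, eq_div_iff hs.ne']
        exact h1'
      rcases sq_eq_sq_iff_eq_or_eq_neg.mp ha2 with h | h
      · left
        show (fun j => p.1 j i) = r i • v i
        rw [ha, h]
      · right
        show (fun j => p.1 j i) ∈ ({(-(r i)) • v i} : Set (Fin 3 → ℝ))
        rw [ha, h]
        exact Set.mem_singleton _
    · rw [Prod.ext_iff]
      exact ⟨by ext j i; rfl, hp2.symm⟩
  exact Set.Finite.subset (Set.Finite.image _ (Set.Finite.pi fun i => (Set.finite_singleton _).insert _)) key

lemma euclAct_comp {n : ℕ} (R1 R2 : Matrix (Fin 3) (Fin 3) ℝ) (t1 t2 : Fin 3 → ℝ)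
    (V : Matrix (Fin n) (Fin 3) ℝ) :
    euclAct (R1 * R2) (R1.mulVec t2 + t1) V = euclAct R1 t1 (euclAct R2 t2 V) := by
  simp only [euclAct, Matrix.transpose_mul, Matrix.add_mul, vecMulVec_mulVec_right_s11]
  have : Matrix.vecMulVec (onesVec n) (R1.mulVec t2 + t1)
      = Matrix.vecMulVec (onesVec n) t2 * R1ᵀ + Matrix.vecMulVec (onesVec n) t1 := by
    ext i j
    simp [Matrix.vecMulVec_apply, Matrix.add_apply, mul_add, Matrix.mul_apply,
      Matrix.mulVec, dotProduct, Finset.mul_sum, mul_comm, mul_left_comm]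
  rw [this, ← Matrix.mul_assoc]
  abel

lemma euclActInv_comp {n : ℕ} {R1 : Matrix (Fin 3) (Fin 3) ℝ}
    (hR1 : R1ᵀ * R1 = 1) (R2 : Matrix (Fin 3) (Fin 3) ℝ) (t1 t2 : Fin 3 → ℝ)
    (V : Matrix (Fin n) (Fin 3) ℝ) :
    euclActInv (R1 * R2) (R1.mulVec t2 + t1) (euclAct R1 t1 V) = euclActInv R2 t2 V := by
  simp only [euclActInv, euclAct]
  have : Matrix.vecMulVec (onesVec n) (R1.mulVec t2 + t1)
      = Matrix.vecMulVec (onesVec n) t2 * R1ᵀ + Matrix.vecMulVec (onesVec n) t1 := by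
    ext i j
    simp [Matrix.vecMulVec_apply, Matrix.add_apply, mul_add, Matrix.mul_apply,
      Matrix.mulVec, dotProduct, Finset.mul_sum, mul_comm, mul_left_comm]
  rw [this]
  have : V * R1ᵀ + Matrix.vecMulVec (onesVec n) t1 -
      (Matrix.vecMulVec (onesVec n) t2 * R1ᵀ + Matrix.vecMulVec (onesVec n) t1)
      = (V - Matrix.vecMulVec (onesVec n) t2) * R1ᵀ := by
    rw [Matrix.sub_mul]; abel
  rw [this, ← Matrix.mul_assoc, Matrix.mul_assoc _ R1ᵀ R1, hR1, Matrix.mul_one]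

lemma avg_euclAct {n : ℕ} {α : Type*} (s : Finset α) (hs : s.Nonempty)
    (R : Matrix (Fin 3) (Fin 3) ℝ) (t : Fin 3 → ℝ) (X : α → Matrix (Fin n) (Fin 3) ℝ) :
    ((s.card : ℝ))⁻¹ • ∑ q ∈ s, euclAct R t (X q)
      = euclAct R t (((s.card : ℝ))⁻¹ • ∑ q ∈ s, X q) := by
  have hc : ((s.card : ℝ)) ≠ 0 := Nat.cast_ne_zero.mpr (Finset.card_ne_zero.mpr hs)
  simp only [euclAct]
  rw [Finset.sum_add_distrib, Finset.sum_const, ← Matrix.sum_mul, smul_add,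
    Matrix.smul_mul, ← Nat.cast_smul_eq_nsmul ℝ, smul_smul, inv_mul_cancel₀ hc, one_smul]

lemma decAvg_act {m d n : ℕ} (hd : 0 < d) (lam : Fin 3 → ℝ) (hmono : StrictMono lam)
    (ψ : (Fin m → ℝ) × Matrix (Fin d) (Fin 3) ℝ → Matrix (Fin n) (Fin 3) ℝ)
    (Zj : (Fin m → ℝ) × Matrix (Fin d) (Fin 3) ℝ)
    (heig : ∀ i, IsEigenvalue (wcov (onesVec d) Zj.2) (lam i))
    {R : Matrix (Fin 3) (Fin 3) ℝ} (hR : R * Rᵀ = 1) (t : Fin 3 → ℝ) :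
    decAvg lam ψ (rhoZ R t Zj) = euclAct R t (decAvg lam ψ Zj) := by
  have hR' : Rᵀ * R = 1 := orth_tr hR
  set F := pcaFrame lam (onesVec d) Zj.2 with hF
  have hfin : F.Finite := pcaFrame_finite lam hmono Zj.2 heig
  have hne : F.Nonempty := pcaFrame_nonempty lam Zj.2 heig
  have hc : 0 < Nat.card F := Nat.card_pos_iff.mpr ⟨hne.to_subtype, hfin.to_subtype⟩
  have hcne : ((Nat.card F : ℝ)) ≠ 0 := Nat.cast_ne_zero.mpr hc.ne'
  set φ : Matrix (Fin 3) (Fin 3) ℝ × (Fin 3 → ℝ) → Matrix (Fin 3) (Fin 3) ℝ × (Fin 3 → ℝ) :=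
    fun q => (R * q.1, R.mulVec q.2 + t) with hφ
  have hφinj : Function.Injective φ := by
    intro q q' h
    rw [Prod.ext_iff] at h ⊢
    obtain ⟨h1, h2⟩ := h
    constructor
    · have := congrArg (fun M => Rᵀ * M) h1
      simpa [hφ, ← Matrix.mul_assoc, hR', Matrix.one_mul] using this
    · have h2' : R.mulVec q.2 = R.mulVec q'.2 := by
        have := congrArg (fun x => x - t) h2
        simpa [hφ] using this
      have := congrArg (fun x => Rᵀ.mulVec x) h2'
      simpa [Matrix.mulVec_mulVec, hR', Matrix.one_mulVec] using this
  have hframe : pcaFrame lam (onesVec d) (rhoZ R t Zj).2 = φ '' F := by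
    show pcaFrame lam (onesVec d) (euclAct R t Zj.2) = _
    rw [pcaFrame_act hd lam hR t Zj.2]
  rw [decAvg, hframe, Nat.card_image_of_injective hφinj,
    finsum_mem_image (hφinj.injOn)]
  have hfun : ∀ q ∈ F,
      euclAct (φ q).1 (φ q).2 (ψ ((rhoZ R t Zj).1, euclActInv (φ q).1 (φ q).2 (rhoZ R t Zj).2))
      = euclAct R t (euclAct q.1 q.2 (ψ (Zj.1, euclActInv q.1 q.2 Zj.2))) := by
    intro q _
    show euclAct (R * q.1) (R.mulVec q.2 + t) (ψ (Zj.1, euclActInv (R * q.1) (R.mulVec q.2 + t) (euclAct R t Zj.2))) = _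
    rw [euclActInv_comp hR', euclAct_comp]
  rw [finsum_mem_congr rfl hfun, decAvg, ← hF]
  have hFc : F = (hfin.toFinset : Set (Matrix (Fin 3) (Fin 3) ℝ × (Fin 3 → ℝ))) := hfin.coe_toFinset.symm
  rw [hFc, finsum_mem_coe_finset, finsum_mem_coe_finset]
  have hnc : ((Nat.card (hfin.toFinset : Set (Matrix (Fin 3) (Fin 3) ℝ × (Fin 3 → ℝ))) : ℝ)) = (hfin.toFinset.card : ℝ) := by
    simp [Nat.card_coe_set_eq, Set.ncard_coe_finset, ← hFc]
    exact Set.ncard_eq_toFinset_card F hfin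
  rw [hnc]
  have hne' : hfin.toFinset.Nonempty := by rwa [Set.Finite.toFinset_nonempty]
  exact avg_euclAct hfin.toFinset hne' R t _

/-- **Theorem 1, decoder part** (part-equivariance of the frame-averaged decoder):
for hard weights `W ∈ {0,1}^{n×k}` with rows summing to `1` and an arbitrary backbone
`ψ`, transforming each latent code `Z_j` by `ρ_Z(g_j)` transforms the decoded shape by
`Ψ(Z') = Σ_j w_j ⊙ (ρ_Y(g_j) Ψ(Z))`. -/
theorem decoder_part_equivariant {n k m d : ℕ} (hd : 0 < d)
    (W : Matrix (Fin n) (Fin k) ℝ)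
    (hW01 : ∀ i j, W i j = 0 ∨ W i j = 1)
    (hWrow : ∀ i, ∑ j, W i j = 1)
    (ψ : (Fin m → ℝ) × Matrix (Fin d) (Fin 3) ℝ → Matrix (Fin n) (Fin 3) ℝ)
    (Z : Fin k → (Fin m → ℝ) × Matrix (Fin d) (Fin 3) ℝ)
    (lam : Fin k → Fin 3 → ℝ)
    (hmono : ∀ j, StrictMono (lam j))
    (heig : ∀ j i, IsEigenvalue (wcov (onesVec d) (Z j).2) (lam j i))
    (g : Fin k → Matrix (Fin 3) (Fin 3) ℝ × (Fin 3 → ℝ))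
    (hg : ∀ l, (g l).1 * (g l).1ᵀ = 1) :
    decShape W lam ψ (fun j => rhoZ (g j).1 (g j).2 (Z j)) =
      ∑ j, rowScale (fun i => W i j) (euclAct (g j).1 (g j).2 (decShape W lam ψ Z)) := by
  have key : ∀ j, decAvg (lam j) ψ (rhoZ (g j).1 (g j).2 (Z j))
      = euclAct (g j).1 (g j).2 (decAvg (lam j) ψ (Z j)) :=
    fun j => decAvg_act hd (lam j) (hmono j) ψ (Z j) (heig j) (hg j) (g j).2
  rw [decShape]
  simp only [key]
  refine Finset.sum_congr rfl fun j _ => ?_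
  ext i c
  show W i j * _ = W i j * _
  rcases hW01 i j with h0 | h1
  · rw [h0, zero_mul, zero_mul]
  · congr 1
    have hrow : ∀ c', decShape W lam ψ Z i c' = decAvg (lam j) ψ (Z j) i c' := by
      intro c'
      rw [decShape, Matrix.sum_apply]
      rw [Finset.sum_eq_single j]
      · show W i j * _ = _
        rw [h1, one_mul]
      · intro l _ hl
        show W i l * _ = 0
        have hz : ∑ l' ∈ Finset.univ.erase j, W i l' = 0 := by
          have h := hWrow i
          rw [← Finset.add_sum_erase _ _ (Finset.mem_univ j), h1] at h
          linarith
        have : W i l = 0 := by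
          have := (Finset.sum_eq_zero_iff_of_nonneg (fun l' _ => by
            rcases hW01 i l' with h | h <;> rw [h] <;> norm_num)).mp hz l
            (Finset.mem_erase.mpr ⟨hl, Finset.mem_univ l⟩)
          exact this
        rw [this, zero_mul]
      · intro h; exact absurd (Finset.mem_univ j) h
    simp only [euclAct, Matrix.add_apply, Matrix.mul_apply, Matrix.vecMulVec_apply]
    congr 1
    exact Finset.sum_congr rfl fun l' _ => by rw [hrow l']

end
end
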